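/- Let h : [−π/2, π/2] → ℝ be twice continuously differentiable, odd (h(−t) = −h(t) for all t), with h'(π/2) = 0. Then ∫_{−π/2}^{π/2} ( 2 h''(t) h(t) cos t − h''(t) h'(t) sin t + 3 h(t)² cos t − 2 h(t) h'(t) sin t ) dt = ∫₀^{π/2} ( 6 h(t)² − 3 h'(t)² ) cos t dt. -/

import Mathlib

open Real Set

/-!
The integrand is `d/dt (2 h h' cos t - ½ h'² sin t) + 3 (h² - ½ h'²) cos t`. The boundary term
vanishes at `±π/2`, since `cos (±π/2) = 0` and `h'`, the derivative of an odd function, is even,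
so `h' (-π/2) = h' (π/2) = 0`. The remaining integrand is even, so its integral over
`[-π/2, π/2]` is twice its integral over `[0, π/2]`.
-/

open MeasureTheory intervalIntegral

theorem hasDerivWithinAt_Icc_even_of_odd {a : ℝ} (ha : 0 < a) {h h' : ℝ → ℝ}
    (hh : ∀ t ∈ Icc (-a) a, HasDerivWithinAt h (h' t) (Icc (-a) a) t)
    (hodd : ∀ t ∈ Icc (-a) a, h (-t) = -h t) {t : ℝ} (ht : t ∈ Icc (-a) a) :
    h' (-t) = h' t := by
  have hneg : MapsTo (fun u : ℝ => -u) (Icc (-a) a) (Icc (-a) a) :=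
    fun u ⟨hu₁, hu₂⟩ => ⟨neg_le_neg hu₂, by linarith⟩
  have hreflect : HasDerivWithinAt (fun u => h (-u)) (h' (-t) * -1) (Icc (-a) a) t :=
    (hh (-t) (hneg ht)).comp t (hasDerivAt_neg t).hasDerivWithinAt hneg
  have hneg_reflect : HasDerivWithinAt (fun u => -h (-u)) (h' (-t)) (Icc (-a) a) t := by
    simpa using hreflect.fun_neg
  have hh_reflected : HasDerivWithinAt h (h' (-t)) (Icc (-a) a) t :=
    hneg_reflect.congr (fun u hu => by rw [hodd u hu, neg_neg]) (by rw [hodd t ht, neg_neg])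
  exact (uniqueDiffOn_Icc (neg_lt_self ha) t ht).eq_deriv _ hh_reflected (hh t ht)

theorem integral_neg_self_eq_two_smul_of_even {E : Type*} [NormedAddCommGroup E]
    [NormedSpace ℝ E] {f : ℝ → E} {a : ℝ} (hf : IntervalIntegrable f volume (-a) a)
    (heven : ∀ t ∈ uIcc 0 a, f (-t) = f t) :
    ∫ t in -a..a, f t = (2 : ℝ) • ∫ t in 0..a, f t := by
  have hzero : (0 : ℝ) ∈ uIcc (-a) a := by
    rcases le_total 0 a with ha | ha <;> simp [ha]
  have hleft : ∫ t in -a..0, f t = ∫ t in 0..a, f t := by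
    rw [← neg_zero, ← integral_comp_neg, neg_zero]
    exact integral_congr heven
  rw [← integral_add_adjacent_intervals
      (hf.mono_set (uIcc_subset_uIcc left_mem_uIcc hzero))
      (hf.mono_set (uIcc_subset_uIcc hzero right_mem_uIcc)), hleft, two_smul]

noncomputable def boundaryTerm (h h' : ℝ → ℝ) (t : ℝ) : ℝ :=
  2 * h t * h' t * cos t - h' t ^ 2 * sin t / 2

section BoundaryTerm

variable {h h' h'' : ℝ → ℝ}

theorem hasDerivAt_boundaryTerm {t : ℝ} (dh : HasDerivAt h (h' t) t)
    (dh' : HasDerivAt h' (h'' t) t) :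
    HasDerivAt (boundaryTerm h h')
      (2 * h'' t * h t * cos t - h'' t * h' t * sin t - 2 * h t * h' t * sin t
        + 3 * h' t ^ 2 * cos t / 2) t := by
  refine ((((dh.const_mul 2).fun_mul dh').fun_mul (hasDerivAt_cos t)).fun_sub
    (((dh'.fun_pow 2).fun_mul (hasDerivAt_sin t)).div_const 2)).congr_deriv ?_
  ring

theorem integral_eq_boundaryTerm_sub {a b : ℝ} (hab : a ≤ b)
    (hh : ∀ t ∈ Icc a b, HasDerivWithinAt h (h' t) (Icc a b) t)
    (hh' : ∀ t ∈ Icc a b, HasDerivWithinAt h' (h'' t) (Icc a b) t)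
    (hcont : ContinuousOn h'' (Icc a b)) :
    ∫ t in a..b, (2 * h'' t * h t * cos t - h'' t * h' t * sin t - 2 * h t * h' t * sin t
        + 3 * h' t ^ 2 * cos t / 2)
      = boundaryTerm h h' b - boundaryTerm h h' a := by
  have hc := HasDerivWithinAt.continuousOn hh
  have hc' := HasDerivWithinAt.continuousOn hh'
  apply integral_eq_sub_of_hasDerivAt_of_le hab (by unfold boundaryTerm; fun_prop) _
    (ContinuousOn.intervalIntegrable_of_Icc hab (by fun_prop))
  intro t ht
  have hnhds : Icc a b ∈ nhds t := Icc_mem_nhds ht.1 ht.2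
  exact hasDerivAt_boundaryTerm ((hh t (Ioo_subset_Icc_self ht)).hasDerivAt hnhds)
    ((hh' t (Ioo_subset_Icc_self ht)).hasDerivAt hnhds)

end BoundaryTerm

theorem integral_reduction (h h' h'' : ℝ → ℝ)
    (hh : ∀ t ∈ Icc (-(π/2)) (π/2), HasDerivWithinAt h (h' t) (Icc (-(π/2)) (π/2)) t)
    (hh' : ∀ t ∈ Icc (-(π/2)) (π/2), HasDerivWithinAt h' (h'' t) (Icc (-(π/2)) (π/2)) t)
    (hcont : ContinuousOn h'' (Icc (-(π/2)) (π/2)))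
    (hodd : ∀ t ∈ Icc (-(π/2)) (π/2), h (-t) = - h t)
    (hbc : h' (π/2) = 0) :
    ∫ t in (-(π/2))..(π/2),
        (2 * h'' t * h t * Real.cos t - h'' t * h' t * Real.sin t
          + 3 * h t ^ 2 * Real.cos t - 2 * h t * h' t * Real.sin t)
      = ∫ t in (0:ℝ)..(π/2), (6 * h t ^ 2 - 3 * h' t ^ 2) * Real.cos t := by
  have hπ : 0 < π / 2 := by positivity
  have hle : -(π / 2) ≤ π / 2 := neg_le_self hπ.le
  have hbc' : h' (-(π / 2)) = 0 := by
    rw [hasDerivWithinAt_Icc_even_of_odd hπ hh hodd (right_mem_Icc.2 hle), hbc]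
  set G : ℝ → ℝ := fun t => 3 * (h t ^ 2 - h' t ^ 2 / 2) * cos t
  have hc := HasDerivWithinAt.continuousOn hh
  have hc' := HasDerivWithinAt.continuousOn hh'
  have hGeven : ∀ t ∈ uIcc 0 (π / 2), G (-t) = G t := by
    intro t ht
    rw [uIcc_of_le hπ.le] at ht
    have ht' : t ∈ Icc (-(π / 2)) (π / 2) := ⟨by linarith [ht.1], ht.2⟩
    simp only [G, hodd t ht', hasDerivWithinAt_Icc_even_of_odd hπ hh hodd ht', cos_neg, neg_sq]
  have hGint : IntervalIntegrable G volume (-(π / 2)) (π / 2) :=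
    ContinuousOn.intervalIntegrable_of_Icc hle (by fun_prop)
  calc _ = ∫ t in -(π / 2)..π / 2, ((2 * h'' t * h t * cos t - h'' t * h' t * sin t
          - 2 * h t * h' t * sin t + 3 * h' t ^ 2 * cos t / 2) + G t) :=
        integral_congr fun t _ => by ring
    _ = ∫ t in -(π / 2)..π / 2, G t := by
        rw [integral_add (ContinuousOn.intervalIntegrable_of_Icc hle (by fun_prop)) hGint,
          integral_eq_boundaryTerm_sub hle hh hh' hcont]
        simp [boundaryTerm, hbc, hbc']
    _ = 2 * ∫ t in 0..π / 2, G t := integral_neg_self_eq_two_smul_of_even hGint hGeven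
    _ = _ := by
        rw [← intervalIntegral.integral_const_mul]
        exact integral_congr fun t _ => by ring
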